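/- Let ρ be a density matrix (positive semidefinite complex matrix with trace 1) on a finite index type D, let m ≥ 1 and σ ∈ Perm (Fin m), and let W_σ be the permutation operator on (Fin m → D) with entries W_σ(x,y) = 1 if x = y ∘ σ and 0 otherwise. Then |trace(W_σ * ρ^{⊗m})| ≤ 1. -/

import Mathlib

/-!
Summing out the permutation operator, `tr (W_σ ρ^{⊗m}) = ∑ₓ ∏ₜ ρ(x t, x (σ t))`. Positive
semidefiniteness gives `|ρ a b|² ≤ ρ a a · ρ b b`, so, as `σ` is a bijection, each product has
absolute value at most `∏ₜ ρ(x t, x t)`; these sum to `(tr ρ)^m = 1`.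
-/

open Matrix ComplexOrder

/-- The `m`-fold tensor power of a square matrix, as a matrix on `Fin m → D`. -/
noncomputable def tensorPow {D : Type*} [Fintype D] (A : Matrix D D ℂ) (m : ℕ) :
    Matrix (Fin m → D) (Fin m → D) ℂ :=
  Matrix.of fun x y => ∏ t, A (x t) (y t)

/-- The permutation operator `W_σ` on `m` copies: `W_σ(x,y) = 1` if `x = y ∘ σ`, else `0`. -/
noncomputable def permOp {D : Type*} [DecidableEq D] {m : ℕ} (σ : Equiv.Perm (Fin m)) :
    Matrix (Fin m → D) (Fin m → D) ℂ :=
  Matrix.of fun x y => if x = y ∘ σ then 1 else 0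

namespace Matrix.PosSemidef

variable {𝕜 n : Type*} [RCLike 𝕜] {A : Matrix n n 𝕜}

/-- Entrywise Cauchy–Schwarz: the `2 × 2` principal submatrix on `{i, j}` has nonnegative
determinant. -/
theorem norm_apply_sq_le (hA : A.PosSemidef) (i j : n) :
    ‖A i j‖ ^ 2 ≤ RCLike.re (A i i) * RCLike.re (A j j) := by
  classical
  have hdet := (hA.submatrix ![i, j]).det_nonneg
  rw [det_fin_two] at hdet
  simp only [submatrix_apply, Matrix.cons_val_zero, Matrix.cons_val_one] at hdet
  rw [← hA.isHermitian.apply j i, RCLike.star_def, RCLike.mul_conj,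
    ← hA.isHermitian.coe_re_apply_self i, ← hA.isHermitian.coe_re_apply_self j] at hdet
  exact_mod_cast sub_nonneg.mp hdet

theorem re_apply_self_nonneg (hA : A.PosSemidef) (i : n) : 0 ≤ RCLike.re (A i i) :=
  (RCLike.nonneg_iff.mp hA.diag_nonneg).1

theorem prod_norm_apply_perm_le {ι : Type*} [Fintype ι] (hA : A.PosSemidef)
    (σ : Equiv.Perm ι) (x : ι → n) :
    ∏ t, ‖A (x t) (x (σ t))‖ ≤ ∏ t, RCLike.re (A (x t) (x t)) := by
  refine le_of_pow_le_pow_left₀ two_ne_zero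
    (Finset.prod_nonneg fun t _ => hA.re_apply_self_nonneg (x t)) ?_
  calc (∏ t, ‖A (x t) (x (σ t))‖) ^ 2
      = ∏ t, ‖A (x t) (x (σ t))‖ ^ 2 := (Finset.prod_pow _ _ _).symm
    _ ≤ ∏ t, RCLike.re (A (x t) (x t)) * RCLike.re (A (x (σ t)) (x (σ t))) :=
        Finset.prod_le_prod (fun _ _ => by positivity) fun t _ => hA.norm_apply_sq_le _ _
    _ = (∏ t, RCLike.re (A (x t) (x t))) ^ 2 := by
        rw [Finset.prod_mul_distrib, Equiv.prod_comp σ fun t => RCLike.re (A (x t) (x t)), sq]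

end Matrix.PosSemidef

theorem trace_permOp_mul_tensorPow {D : Type*} [Fintype D] [DecidableEq D] {m : ℕ}
    (σ : Equiv.Perm (Fin m)) (A : Matrix D D ℂ) :
    (permOp σ * tensorPow A m).trace = ∑ x : Fin m → D, ∏ t, A (x t) (x (σ t)) := by
  simp only [trace, diag_apply, mul_apply, permOp, tensorPow, of_apply, ite_mul, one_mul,
    zero_mul]
  rw [Finset.sum_comm]
  simp only [Finset.sum_ite_eq', Finset.mem_univ, if_true, Function.comp_apply]

theorem Matrix.PosSemidef.norm_trace_permOp_mul_tensorPow_le {D : Type*} [Fintype D]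
    [DecidableEq D] {A : Matrix D D ℂ} (hA : A.PosSemidef) {m : ℕ} (σ : Equiv.Perm (Fin m)) :
    ‖(permOp σ * tensorPow A m).trace‖ ≤ A.trace.re ^ m :=
  calc ‖(permOp σ * tensorPow A m).trace‖
      = ‖∑ x : Fin m → D, ∏ t, A (x t) (x (σ t))‖ := by rw [trace_permOp_mul_tensorPow]
    _ ≤ ∑ x : Fin m → D, ∏ t, ‖A (x t) (x (σ t))‖ := by
        simp only [← norm_prod]; exact norm_sum_le _ _
    _ ≤ ∑ x : Fin m → D, ∏ t, (A (x t) (x t)).re :=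
        Finset.sum_le_sum fun x _ => hA.prod_norm_apply_perm_le σ x
    _ = A.trace.re ^ m := by
        rw [trace, Complex.re_sum, Fintype.sum_pow]
        rfl

theorem abs_trace_permOp_mul_tensorPow_le_one_general {D : Type*} [Fintype D] [DecidableEq D]
    (ρ : Matrix D D ℂ) (hρ : ρ.PosSemidef) (htr : ρ.trace = 1)
    (m : ℕ) (σ : Equiv.Perm (Fin m)) :
    ‖Matrix.trace (permOp σ * tensorPow ρ m)‖ ≤ 1 := by
  simpa [htr] using hρ.norm_trace_permOp_mul_tensorPow_le σ

/-- For a density matrix `ρ` (positive semidefinite with trace 1), the expectation value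
of any permutation operator on `m` copies of `ρ` has absolute value at most 1. -/
theorem abs_trace_permOp_mul_tensorPow_le_one {D : Type*} [Fintype D] [DecidableEq D]
    (ρ : Matrix D D ℂ) (hρ : ρ.PosSemidef) (htr : ρ.trace = 1)
    (m : ℕ) (hm : 1 ≤ m) (σ : Equiv.Perm (Fin m)) :
    ‖Matrix.trace (permOp σ * tensorPow ρ m)‖ ≤ 1 :=
  abs_trace_permOp_mul_tensorPow_le_one_general ρ hρ htr m σ
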